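/- Suppose G is the path P = (1,2,…,m) and all agents have binary additive valuations whose approval sets A(i) are connected on the path (intervals) and are non-nested: there is no pair of agents i, j with min A(i) < min A(j) and max A(j) < max A(i). Then there exists a connected allocation that is an MMS allocation and maximizes utilitarian social welfare among all connected allocations. -/

import Mathlib

open Finset

/-- A finite set of items is *connected* in the item graph `G` if the induced
subgraph is preconnected (the empty set counts as connected). -/
def ConnSet {V : Type*} (G : SimpleGraph V) (X : Finset V) : Prop :=
  (G.induce (X : Set V)).Preconnected

/-- `π` is a connected allocation of the items in `R` among the agents in `N`. -/
def IsConnAllocOn {V N : Type*} [DecidableEq V] (G : SimpleGraph V)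
    (R : Finset V) (π : N → Finset V) : Prop :=
  (∀ i, π i ⊆ R) ∧ (∀ i, ConnSet G (π i)) ∧
    (∀ i j, i ≠ j → Disjoint (π i) (π j)) ∧ (∀ v ∈ R, ∃ i, v ∈ π i)

/-- `π` is a connected allocation of all items among the agents in `N`. -/
def IsConnAlloc {V N : Type*} [Fintype V] [DecidableEq V] (G : SimpleGraph V)
    (π : N → Finset V) : Prop :=
  IsConnAllocOn G Finset.univ π

/-- `π'` is a Pareto-improvement of `π`. -/
def ParetoImproves {V N : Type*} (u : N → Finset V → ℝ)
    (π' π : N → Finset V) : Prop :=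
  (∀ i, u i (π i) ≤ u i (π' i)) ∧ ∃ i, u i (π i) < u i (π' i)

/-- `π` is Pareto-optimal: no connected allocation Pareto-improves it. -/
def ParetoOptimal {V N : Type*} [Fintype V] [DecidableEq V] (G : SimpleGraph V)
    (u : N → Finset V → ℝ) (π : N → Finset V) : Prop :=
  ∀ π', IsConnAlloc G π' → ¬ ParetoImproves u π' π

/-- `π` satisfies EF1: any envy can be removed by deleting a single item
(keeping the envied bundle connected). -/
def EF1 {V N : Type*} [Fintype V] [DecidableEq V] (G : SimpleGraph V)
    (u : N → Finset V → ℝ) (π : N → Finset V) : Prop :=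
  ∀ i j, u i (π j) ≤ u i (π i) ∨
    ∃ v ∈ π j, ConnSet G ((π j).erase v) ∧ u i ((π j).erase v) ≤ u i (π i)

/-- The maximin fair share of an agent with valuation `u`, when the items are
divided into `|N|` connected bundles. -/
noncomputable def mmsVal {V : Type*} (N : Type*) [Fintype V] [DecidableEq V]
    (G : SimpleGraph V) (u : Finset V → ℝ) : ℝ :=
  sSup {x : ℝ | ∃ P : N → Finset V, IsConnAlloc G P ∧
    x = sInf (Set.range fun j => u (P j))}

/-- `π` is an MMS allocation: every agent gets at least her maximin fair share. -/
def IsMMS {V N : Type*} [Fintype V] [DecidableEq V] (G : SimpleGraph V)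
    (u : N → Finset V → ℝ) (π : N → Finset V) : Prop :=
  ∀ i, mmsVal N G (u i) ≤ u i (π i)


/-!
Each agent's maximin share is at most `⌊|A i| / n⌋` (pigeonhole over the `n` bundles), and no
connected allocation has welfare above the number of approved items. Write the approval sets as
intervals `[lo i, hi i)`; non-nestedness lets us sort the agents so that both endpoints are
nondecreasing. Cutting the path from left to right, each agent in turn reserves a block of
`⌊|A i| / n⌋` approved items right after the previous block, and the cuts between blocks are
placed so that every approved item goes to an agent approving it. The blocks fit because a run of
consecutive blocks starting at `lo a` and ending with agent `k` consists of at most `n` quotas,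
each at most an `n`-th of the length of `[lo a, hi k)`.
-/

section Partition

variable {V N : Type*} [Fintype V] [DecidableEq V] {G : SimpleGraph V}

theorem IsConnAlloc.sum_card_inter {π : N → Finset V} [Fintype N] (hπ : IsConnAlloc G π)
    (B : Finset V) : ∑ i, #(π i ∩ B) = #B := by
  obtain ⟨-, -, hdisj, hcov⟩ := hπ
  rw [← card_biUnion fun i _ j _ hij =>
    (hdisj i j hij).mono inter_subset_left inter_subset_left]
  congr 1
  ext v
  simp only [mem_biUnion, mem_univ, mem_inter, true_and]
  exact ⟨fun ⟨_, _, hv⟩ => hv, fun hv => (hcov v (mem_univ v)).imp fun _ hi => ⟨hi, hv⟩⟩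

theorem mmsVal_card_inter_le [Fintype N] [Nonempty N] (B : Finset V) :
    mmsVal N G (fun X => (#(X ∩ B) : ℝ)) ≤ ((#B / Fintype.card N : ℕ) : ℝ) := by
  refine Real.sSup_le (fun x ⟨P, hP, hx⟩ => ?_) (by positivity)
  obtain ⟨j, -, hj⟩ : ∃ j ∈ univ, #(P j ∩ B) < #B / Fintype.card N + 1 := by
    refine exists_lt_of_sum_lt ?_
    rw [hP.sum_card_inter, sum_const, card_univ, smul_eq_mul, mul_add_one, mul_comm]
    exact Nat.lt_div_mul_add Fintype.card_pos
  have hbdd : BddBelow (Set.range fun k => (#(P k ∩ B) : ℝ)) :=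
    ⟨0, by rintro _ ⟨k, rfl⟩; positivity⟩
  calc x ≤ #(P j ∩ B) := hx ▸ csInf_le hbdd ⟨j, rfl⟩
    _ ≤ _ := mod_cast Nat.le_of_lt_succ hj

theorem sum_card_inter_le_of_approved [Fintype N] {π π' : N → Finset V} (A : N → Finset V)
    (hπ : IsConnAlloc G π) (hπ' : IsConnAlloc G π')
    (happroved : ∀ i j v, v ∈ π i → v ∈ A j → v ∈ A i) :
    ∑ i, #(π' i ∩ A i) ≤ ∑ i, #(π i ∩ A i) := by
  classical
  set U := univ.biUnion A
  have hAU : ∀ i, A i ⊆ U := fun i => subset_biUnion_of_mem A (mem_univ i)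
  have hπU : ∀ i, π i ∩ U = π i ∩ A i := fun i => by
    refine (inter_subset_inter_left (hAU i)).antisymm' fun v hv => ?_
    obtain ⟨hvi, hvU⟩ := mem_inter.1 hv
    obtain ⟨j, -, hvj⟩ := mem_biUnion.1 hvU
    exact mem_inter.2 ⟨hvi, happroved i j v hvi hvj⟩
  calc ∑ i, #(π' i ∩ A i) ≤ ∑ i, #(π' i ∩ U) :=
        sum_le_sum fun i _ => card_le_card (inter_subset_inter_left (hAU i))
    _ = ∑ i, #(π i ∩ A i) := by simp only [hπ'.sum_card_inter, ← hπU, hπ.sum_card_inter]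

theorem isConnAlloc_fiber [DecidableEq N] (f : V → N)
    (hf : ∀ i, ConnSet G {v | f v = i}) : IsConnAlloc G fun i => {v | f v = i} :=
  ⟨fun _ => subset_univ _, hf, fun _ _ hij => disjoint_filter.2 fun _ _ hi hj => hij (hi ▸ hj),
    fun v _ => ⟨f v, mem_filter.2 ⟨mem_univ v, rfl⟩⟩⟩

end Partition

section Path

variable {m : ℕ}

def finIco (m a b : ℕ) : Finset (Fin m) := {v | a ≤ (v : ℕ) ∧ (v : ℕ) < b}

@[simp]
theorem mem_finIco {a b : ℕ} {v : Fin m} : v ∈ finIco m a b ↔ a ≤ (v : ℕ) ∧ (v : ℕ) < b := by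
  simp [finIco]

theorem card_finIco {a b : ℕ} (hb : b ≤ m) : #(finIco m a b) = b - a := by
  rw [← Nat.card_Ico, ← card_map Fin.valEmbedding]
  congr 1
  ext x
  simp only [mem_map, mem_finIco, Fin.valEmbedding_apply, mem_Ico]
  exact ⟨fun ⟨v, hv, hx⟩ => hx ▸ hv, fun hx => ⟨⟨x, by omega⟩, hx, rfl⟩⟩

theorem connSet_pathGraph_of_ordConnected {X : Finset (Fin m)}
    (hX : (X : Set (Fin m)).OrdConnected) : ConnSet (SimpleGraph.pathGraph m) X := by
  suffices h : ∀ (d : ℕ) (u v : (X : Set (Fin m))), (v : ℕ) = u + d →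
      ((SimpleGraph.pathGraph m).induce (X : Set (Fin m))).Reachable u v by
    intro u v
    rcases le_total (u : ℕ) v with huv | hvu
    · exact h _ u v (Nat.add_sub_cancel' huv).symm
    · exact (h _ v u (Nat.add_sub_cancel' hvu).symm).symm
  intro d
  induction d with
  | zero => exact fun u v huv => (Subtype.ext (Fin.ext huv.symm) : u = v) ▸ .refl u
  | succ d ih =>
    intro u v huv
    let w : Fin m := ⟨v - 1, by omega⟩
    have hw : w ∈ (X : Set (Fin m)) :=
      hX.out u.2 v.2 ⟨Fin.le_def.2 (by simp [w]; omega), Fin.le_def.2 (by simp [w])⟩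
    refine (ih u ⟨w, hw⟩ (by simp [w]; omega)).trans (SimpleGraph.Adj.reachable ?_)
    simp only [SimpleGraph.comap_adj, Function.Embedding.subtype_apply,
      SimpleGraph.pathGraph_adj, w]
    omega

theorem ordConnected_of_connSet_pathGraph {X : Finset (Fin m)}
    (hX : ConnSet (SimpleGraph.pathGraph m) X) : (X : Set (Fin m)).OrdConnected := by
  refine ⟨fun u hu v hv w ⟨huw, hwv⟩ => ?_⟩
  by_contra hw
  obtain ⟨p⟩ := hX ⟨u, hu⟩ ⟨v, hv⟩
  have hltw : u < w := lt_of_le_of_ne huw fun h => hw (h ▸ hu)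
  obtain ⟨d, -, hd, hd'⟩ := p.exists_boundary_dart {x | (x : Fin m) < w} hltw (not_lt.2 hwv)
  have hadj := d.adj
  simp only [SimpleGraph.comap_adj, Function.Embedding.subtype_apply,
    SimpleGraph.pathGraph_adj] at hadj
  simp only [Set.mem_ofPred_eq, not_lt, Fin.lt_def] at hd hd'
  have hdw : (d.snd : Fin m) = w := Fin.ext (by omega)
  exact hw (hdw ▸ d.snd.2)

theorem eq_finIco_of_connSet_pathGraph {X : Finset (Fin m)}
    (hX : ConnSet (SimpleGraph.pathGraph m) X) (hne : X.Nonempty) :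
    X = finIco m (X.min' hne) (X.max' hne + 1) := by
  ext v
  rw [mem_finIco, Nat.lt_add_one_iff, ← Fin.le_def, ← Fin.le_def]
  exact ⟨fun hv => ⟨X.min'_le v hv, X.le_max' v hv⟩,
    fun hv => (ordConnected_of_connSet_pathGraph hX).out (X.min'_mem hne) (X.max'_mem hne) hv⟩

end Path

theorem exists_finIco_of_nonnested {m : ℕ} {N : Type*} (A : N → Finset (Fin m))
    (hconn : ∀ i, ConnSet (SimpleGraph.pathGraph m) (A i))
    (hnonnested : ∀ i j (hi : (A i).Nonempty) (hj : (A j).Nonempty),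
      ¬ ((A i).min' hi < (A j).min' hj ∧ (A j).max' hj < (A i).max' hi)) :
    ∃ lo hi : N → ℕ, A = (fun i => finIco m (lo i) (hi i)) ∧ (∀ i, lo i ≤ hi i) ∧
      (∀ i, hi i ≤ m) ∧ ∀ i j, lo i < lo j → hi i ≤ hi j := by
  classical
  refine ⟨fun i => if h : (A i).Nonempty then (A i).min' h else 0,
    fun i => if h : (A i).Nonempty then (A i).max' h + 1 else 0,
    funext fun i => ?_, fun i => ?_, fun i => ?_, fun i j => ?_⟩
  · by_cases h : (A i).Nonempty
    · simpa only [dif_pos h] using eq_finIco_of_connSet_pathGraph (hconn i) h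
    · ext v
      simp [not_nonempty_iff_eq_empty.1 h]
  · dsimp only
    split_ifs with h
    · exact (Fin.le_def.1 ((A i).min'_le_max' h)).trans (Nat.le_succ _)
    · rfl
  · dsimp only
    split_ifs with h
    · exact ((A i).max' h).isLt
    · exact Nat.zero_le m
  · by_cases hi : (A i).Nonempty
    · by_cases hj : (A j).Nonempty
      · simp only [dif_pos hi, dif_pos hj]
        intro hlt
        have := hnonnested i j hi hj
        rw [Fin.lt_def, Fin.lt_def] at this
        omega
      · simp [dif_neg hj]
    · simp [dif_neg hi]

section Cuts

variable (l r q : ℕ → ℕ)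

/-- Agent `k` receives the items in `[cut k, cut (k + 1))`, the last agent everything from its
cut on. Its quota block `[max (cut k) (l k), max (cut k) (l k) + q k)` lies in this bundle and
in its approval interval `[l k, r k)`; the term `min (l (k + 1)) (r k)` ensures that the items of
bundle `k + 1` left of `l (k + 1)` lie beyond `r j` for every `j ≤ k`. -/
def cut : ℕ → ℕ
  | 0 => 0
  | k + 1 => max (max (cut k) (l k) + q k) (min (l (k + 1)) (r k))

theorem le_cut_succ (k : ℕ) : max (cut l r q k) (l k) + q k ≤ cut l r q (k + 1) :=
  le_max_left _ _

theorem monotone_cut : Monotone (cut l r q) :=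
  monotone_nat_of_le_succ fun k =>
    (le_max_left _ _).trans ((Nat.le_add_right _ _).trans (le_cut_succ l r q k))

theorem exists_max_cut_le_sum (k : ℕ) :
    ∃ a ≤ k, max (cut l r q k) (l k) ≤ l a + ∑ t ∈ Ico a k, q t := by
  induction k with
  | zero => exact ⟨0, le_rfl, by simp [cut]⟩
  | succ k ih =>
    obtain ⟨a, hak, ha⟩ := ih
    have hmin : min (l (k + 1)) (r k) ≤ l (k + 1) := min_le_left _ _
    rcases le_total (max (cut l r q k) (l k) + q k) (l (k + 1)) with h | h
    · refine ⟨k + 1, le_rfl, ?_⟩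
      simp only [cut, Ico_self, sum_empty, add_zero]
      exact max_le (max_le h hmin) le_rfl
    · refine ⟨a, hak.trans k.le_succ, ?_⟩
      rw [sum_Ico_succ_top hak, ← add_assoc]
      simp only [cut]
      exact max_le (max_le (by omega) (by omega)) (by omega)

variable {l r q} {p : ℕ}

theorem add_sum_Ico_le (hl : Monotone l) (hr : Monotone r) (hq : ∀ k < p, p * q k + l k ≤ r k)
    {a k : ℕ} (hak : a ≤ k) (hkp : k < p) : l a + ∑ t ∈ Ico a (k + 1), q t ≤ r k := by
  have hla : l a ≤ r k := (Nat.le_add_left _ _).trans ((hq a (by omega)).trans (hr hak))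
  suffices p * ∑ t ∈ Ico a (k + 1), q t ≤ p * (r k - l a) by
    have := Nat.le_of_mul_le_mul_left this (by omega)
    omega
  calc p * ∑ t ∈ Ico a (k + 1), q t = ∑ t ∈ Ico a (k + 1), p * q t := mul_sum ..
    _ ≤ ∑ t ∈ Ico a (k + 1), (r k - l a) := sum_le_sum fun t ht => by
        obtain ⟨hat, htk⟩ := mem_Ico.1 ht
        have := hq t (by omega)
        have := hl hat
        have := hr (Nat.le_of_lt_succ htk)
        omega
    _ = (k + 1 - a) * (r k - l a) := by rw [sum_const, Nat.card_Ico, smul_eq_mul]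
    _ ≤ p * (r k - l a) := Nat.mul_le_mul_right _ (by omega)

theorem max_cut_add_le (hl : Monotone l) (hr : Monotone r) (hq : ∀ k < p, p * q k + l k ≤ r k)
    {k : ℕ} (hkp : k < p) : max (cut l r q k) (l k) + q k ≤ r k := by
  obtain ⟨a, hak, ha⟩ := exists_max_cut_le_sum l r q k
  have := add_sum_Ico_le hl hr hq hak hkp
  rw [sum_Ico_succ_top hak] at this
  omega

theorem cut_succ_le (hl : Monotone l) (hr : Monotone r) (hq : ∀ k < p, p * q k + l k ≤ r k)
    {k : ℕ} (hkp : k < p) : cut l r q (k + 1) ≤ max (l (k + 1)) (r k) :=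
  max_le ((max_cut_add_le hl hr hq hkp).trans (le_max_right _ _))
    ((min_le_left _ _).trans (le_max_left _ _))

variable (l r q) (p : ℕ)

def cutIndex (v : ℕ) : ℕ := Nat.findGreatest (fun k => cut l r q k ≤ v) (p - 1)

theorem monotone_cutIndex : Monotone (cutIndex l r q p) :=
  fun _ _ hvw => Nat.findGreatest_mono_left (fun _ hk => hk.trans hvw) _

theorem cut_cutIndex_le (v : ℕ) : cut l r q (cutIndex l r q p v) ≤ v :=
  Nat.findGreatest_spec (P := fun k => cut l r q k ≤ v) (Nat.zero_le _) (Nat.zero_le v)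

theorem cutIndex_lt {p : ℕ} (hp : 0 < p) (v : ℕ) : cutIndex l r q p v < p :=
  (Nat.findGreatest_le _).trans_lt (by omega)

variable {l r q p}

theorem lt_cut_cutIndex_succ {v : ℕ} (h : cutIndex l r q p v + 1 < p) :
    v < cut l r q (cutIndex l r q p v + 1) :=
  not_le.1 <| Nat.findGreatest_is_greatest (P := fun k => cut l r q k ≤ v) (n := p - 1)
    (Nat.lt_succ_self _) (Nat.le_sub_one_of_lt h)

theorem cutIndex_eq {v k : ℕ} (hkp : k < p) (hk : cut l r q k ≤ v) (hv : v < cut l r q (k + 1)) :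
    cutIndex l r q p v = k :=
  Nat.findGreatest_eq_iff.2 ⟨by omega, fun _ => hk,
    fun _ hj _ hjv => (hv.trans_le (monotone_cut l r q hj)).not_ge hjv⟩

theorem l_cutIndex_le (hl : Monotone l) (hr : Monotone r) {v t : ℕ} (hv : v ∈ Ico (l t) (r t)) :
    l (cutIndex l r q p v) ≤ v := by
  have hcut := cut_cutIndex_le l r q p v
  obtain ⟨hlv, hvr⟩ := mem_Ico.1 hv
  generalize cutIndex l r q p v = k at hcut ⊢
  cases k with
  | zero => exact (hl (Nat.zero_le t)).trans hlv
  | succ j =>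
    have hmin : min (l (j + 1)) (r j) ≤ v := (le_max_right _ _).trans hcut
    by_contra! hvl
    rcases le_or_gt t j with htj | hjt
    · have := hr htj
      omega
    · have := hl (show j + 1 ≤ t from hjt)
      omega

theorem lt_r_cutIndex (hl : Monotone l) (hr : Monotone r) (hq : ∀ k < p, p * q k + l k ≤ r k)
    {v t : ℕ} (htp : t < p) (hv : v ∈ Ico (l t) (r t)) : v < r (cutIndex l r q p v) := by
  obtain ⟨hlv, hvr⟩ := mem_Ico.1 hv
  have hkp := cutIndex_lt l r q (by omega : 0 < p) v
  by_contra! hrv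
  rcases le_or_gt t (cutIndex l r q p v) with htk | hkt
  · have := hr htk
    omega
  · have hnext : v < cut l r q (cutIndex l r q p v + 1) := lt_cut_cutIndex_succ (by omega)
    have := cut_succ_le hl hr hq hkp
    have := hl (show cutIndex l r q p v + 1 ≤ t from hkt)
    omega

end Cuts

theorem exists_monotone_comp_bijOn {S α : Type*} [Fintype S] [Nonempty S] [LinearOrder α]
    (f : S → α) :
    ∃ g : ℕ → S, Monotone (f ∘ g) ∧ Set.BijOn g (Set.Iio (Fintype.card S)) Set.univ := by
  set n := Fintype.card S
  have hn : 0 < n := Fintype.card_pos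
  let e : Fin n ≃ S := (Fintype.equivFin S).symm
  let h : Fin n ≃ S := (Tuple.sort (f ∘ e)).trans e
  have hmono : Monotone (f ∘ h) := Tuple.monotone_sort (f ∘ e)
  refine ⟨fun k => h ⟨min k (n - 1), by omega⟩,
    fun a b hab => hmono (Fin.mk_le_mk.2 (min_le_min_right _ hab)),
    fun _ _ => Set.mem_univ _, fun a ha b hb hab => ?_, fun s _ => ⟨h.symm s, (h.symm s).isLt, ?_⟩⟩
  · have := congrArg Fin.val (h.injective hab)
    simp only [Set.mem_Iio] at ha hb this
    omega
  · simp [min_eq_left (Nat.le_sub_one_of_lt (h.symm s).isLt)]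

theorem exists_monotone_enum_of_nonnested {N : Type*} [Fintype N] [Nonempty N] (lo hi : N → ℕ)
    (hcomp : ∀ i j, lo i < lo j → hi i ≤ hi j) :
    ∃ g : ℕ → N, Monotone (lo ∘ g) ∧ Monotone (hi ∘ g) ∧
      Set.BijOn g (Set.Iio (Fintype.card N)) Set.univ := by
  -- non-nested intervals are ordered componentwise by `lo + hi`
  have hkey : ∀ i j, lo i + hi i ≤ lo j + hi j → lo i ≤ lo j ∧ hi i ≤ hi j := fun i j h => by
    have := hcomp i j
    have := hcomp j i
    omega
  obtain ⟨g, hg, hbij⟩ := exists_monotone_comp_bijOn fun i => lo i + hi i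
  exact ⟨g, fun _ _ hab => (hkey _ _ (hg hab)).1, fun _ _ hab => (hkey _ _ (hg hab)).2, hbij⟩

theorem ordConnected_fiber_comp {α β γ : Type*} [Preorder α] [PartialOrder β] {φ : α → β}
    (hφ : Monotone φ) {g : β → γ} {s : Set β} (hg : s.InjOn g) (hφs : ∀ a, φ a ∈ s) (c : γ) :
    {a | g (φ a) = c}.OrdConnected := by
  refine ⟨fun a ha b hb x ⟨hax, hxb⟩ => ?_⟩
  have hab : φ a = φ b := hg (hφs a) (hφs b) (ha.trans hb.symm)
  have hx : φ x = φ a := le_antisymm (hab ▸ hφ hxb) (hφ hax)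
  exact (congrArg g hx).trans ha

theorem exists_connAlloc_of_intervals {m : ℕ} {N : Type*} [Fintype N] [Nonempty N] [DecidableEq N]
    (lo hi : N → ℕ) (hle : ∀ i, lo i ≤ hi i) (hhi : ∀ i, hi i ≤ m)
    (hcomp : ∀ i j, lo i < lo j → hi i ≤ hi j) :
    ∃ π : N → Finset (Fin m), IsConnAlloc (SimpleGraph.pathGraph m) π ∧
      (∀ i, (hi i - lo i) / Fintype.card N ≤ #(π i ∩ finIco m (lo i) (hi i))) ∧
      ∀ i j v, v ∈ π i → v ∈ finIco m (lo j) (hi j) → v ∈ finIco m (lo i) (hi i) := by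
  set n := Fintype.card N
  obtain ⟨g, hl, hr, hbij⟩ := exists_monotone_enum_of_nonnested lo hi hcomp
  set l := lo ∘ g
  set r := hi ∘ g
  set q := fun k => (r k - l k) / n
  have hq : ∀ k < n, n * q k + l k ≤ r k := fun k _ => by
    have := Nat.mul_div_le (r k - l k) n
    have := hle (g k)
    simp only [l, r, q, Function.comp_apply] at *
    omega
  have hn : 0 < n := Fintype.card_pos
  set φ : Fin m → ℕ := fun v => cutIndex l r q n v
  have hφ : Monotone φ := (monotone_cutIndex l r q n).comp Fin.val_strictMono.monotone
  refine ⟨fun i => {v | g (φ v) = i}, isConnAlloc_fiber _ fun i =>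
    connSet_pathGraph_of_ordConnected ?_, fun i => ?_, fun i j v hv hvj => ?_⟩
  · simpa only [coe_filter, mem_univ, true_and] using
      ordConnected_fiber_comp hφ hbij.injOn (fun v => cutIndex_lt l r q hn v) i
  · obtain ⟨k, hk, rfl⟩ := hbij.surjOn (Set.mem_univ i)
    have hend := max_cut_add_le hl hr hq hk
    set s := max (cut l r q k) (l k)
    have hsub : finIco m s (s + q k) ⊆
        ({v | g (φ v) = g k} : Finset (Fin m)) ∩ finIco m (lo (g k)) (hi (g k)) := by
      intro v hv
      rw [mem_finIco] at hv
      rw [mem_inter, mem_filter, mem_finIco]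
      refine ⟨⟨mem_univ v, congrArg g (cutIndex_eq hk ((le_max_left _ _).trans hv.1)
        (hv.2.trans_le (le_cut_succ l r q k)))⟩, (le_max_right _ _).trans hv.1, hv.2.trans_le hend⟩
    calc (hi (g k) - lo (g k)) / n = #(finIco m s (s + q k)) := by
          rw [card_finIco (hend.trans (hhi (g k))), Nat.add_sub_cancel_left]
          rfl
      _ ≤ _ := card_le_card hsub
  · obtain ⟨t, ht, rfl⟩ := hbij.surjOn (Set.mem_univ j)
    obtain rfl : g (φ v) = i := (mem_filter.1 hv).2
    have hvt : (v : ℕ) ∈ Ico (l t) (r t) := mem_Ico.2 (mem_finIco.1 hvj)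
    exact mem_finIco.2 ⟨l_cutIndex_le hl hr hvt, lt_r_cutIndex hl hr hq ht hvt⟩

/-- On the path `(1,…,m)` (encoded as `Fin m`), if all agents
have binary additive valuations whose approval sets are intervals and are
non-nested, then there is a connected allocation that is an MMS allocation and
maximizes utilitarian social welfare among connected allocations. -/
theorem stmt17 {m : ℕ} {N : Type*} [Fintype N] [Nonempty N]
    (A : N → Finset (Fin m))
    (hconn : ∀ i, ConnSet (SimpleGraph.pathGraph m) (A i))
    (hnonnested : ∀ i j (hi : (A i).Nonempty) (hj : (A j).Nonempty),
      ¬ ((A i).min' hi < (A j).min' hj ∧ (A j).max' hj < (A i).max' hi))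
    (u : N → Finset (Fin m) → ℝ)
    (hu : ∀ i X, u i X = ((X ∩ A i).card : ℝ)) :
    ∃ π : N → Finset (Fin m),
      IsConnAlloc (SimpleGraph.pathGraph m) π ∧
      IsMMS (SimpleGraph.pathGraph m) u π ∧
      ∀ π', IsConnAlloc (SimpleGraph.pathGraph m) π' →
        ∑ i, u i (π' i) ≤ ∑ i, u i (π i) := by
  classical
  obtain ⟨lo, hi, rfl, hle, hhi, hcomp⟩ := exists_finIco_of_nonnested A hconn hnonnested
  obtain ⟨π, hπ, hquota, happroved⟩ := exists_connAlloc_of_intervals lo hi hle hhi hcomp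
  refine ⟨π, hπ, fun i => ?_, fun π' hπ' => ?_⟩
  · calc mmsVal N (SimpleGraph.pathGraph m) (u i)
        ≤ ((#(finIco m (lo i) (hi i)) / Fintype.card N : ℕ) : ℝ) := by
          rw [show u i = _ from funext (hu i)]
          exact mmsVal_card_inter_le _
      _ ≤ u i (π i) := by
          rw [hu, card_finIco (hhi i)]
          exact_mod_cast hquota i
  · simp only [hu]
    exact_mod_cast sum_card_inter_le_of_approved _ hπ hπ' happroved
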